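/- The maps r1, r2 : H_0* → H_0 above are homomorphisms of associative algebras from (H_0*, ∘) (with e2* ∘ e2* = −a e3* for r1, respectively e2* ∘ e2* = a e1* for r2, other products zero) to (H_0, ·): r_t(a* ∘ b*) = r_t(a*) · r_t(b*) for all a*, b*. -/
import Mathlib

open Finset

/-- The Heisenberg product on `H₀`: `e₁ · e₃ = e₂`, other basis products zero. -/
def mulH0 (x y : Fin 3 → ℂ) : Fin 3 → ℂ :=
  fun k => if k = 1 then x 0 * y 2 else 0

/-- Structure constants of `H₀`. -/
def cH0 (i j k : Fin 3) : ℂ := if i = 0 ∧ j = 2 ∧ k = 1 then 1 else 0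

/-- The dual of left multiplication: `⟨L*(x)u*, eⱼ⟩ = ⟨u*, x · eⱼ⟩`. -/
noncomputable def Lstar0 (x u : Fin 3 → ℂ) : Fin 3 → ℂ :=
  fun j => ∑ i, ∑ k, x i * cH0 i j k * u k

/-- The dual of right multiplication: `⟨R*(x)u*, eⱼ⟩ = ⟨u*, eⱼ · x⟩`. -/
noncomputable def Rstar0 (x u : Fin 3 → ℂ) : Fin 3 → ℂ :=
  fun j => ∑ i, ∑ k, x i * cH0 j i k * u k

/-- The linear map `r₁ : H₀* → H₀`, `r₁(e₂*) = −a e₁`, `r₁(e₁*) = a e₂`,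
`r₁(e₃*) = 0`. -/
def r1map (a : ℂ) (u : Fin 3 → ℂ) : Fin 3 → ℂ :=
  fun k => if k = 0 then -a * u 1 else if k = 1 then a * u 0 else 0

/-- The linear map `r₂ : H₀* → H₀`, `r₂(e₂*) = a e₃`, `r₂(e₃*) = −a e₂`,
`r₂(e₁*) = 0`. -/
def r2map (a : ℂ) (u : Fin 3 → ℂ) : Fin 3 → ℂ :=
  fun k => if k = 2 then a * u 1 else if k = 1 then -a * u 2 else 0

/-- The product on `H₀*` induced by `r₁`: `e₂* ∘ e₂* = −a e₃*`. -/
def circ1 (a : ℂ) (u v : Fin 3 → ℂ) : Fin 3 → ℂ :=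
  fun k => if k = 2 then -a * (u 1 * v 1) else 0

/-- The product on `H₀*` induced by `r₂`: `e₂* ∘ e₂* = a e₁*`. -/
def circ2 (a : ℂ) (u v : Fin 3 → ℂ) : Fin 3 → ℂ :=
  fun k => if k = 0 then a * (u 1 * v 1) else 0

/-- `r₁` and `r₂` are homomorphisms of associative algebras from `(H₀*, ∘)`
to `(H₀, ·)`: `r_t(a* ∘ b*) = r_t(a*) · r_t(b*)`. -/
theorem r1_r2_algebra_homomorphisms (a : ℂ) (u v : Fin 3 → ℂ) :
    r1map a (circ1 a u v) = mulH0 (r1map a u) (r1map a v) ∧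
    r2map a (circ2 a u v) = mulH0 (r2map a u) (r2map a v) := by
  constructor <;> funext k <;> fin_cases k <;>
    simp [r1map, r2map, circ1, circ2, mulH0] <;> ring
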